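/- arXiv:2401.00312 — 4 statements merged into one kernel-verified Lean document; each statement's English description precedes it below -/
import Mathlib

section
/- Under the hypotheses of the nondecreasing-sequence theorem (dom T_{n+1} ⊆ dom T_n, ‖T_n f‖ ≤ ‖T_{n+1} f‖ on dom T_{n+1}), if every T_n is a closed operator, then the limit operator T with dom T = {φ ∈ ⋂_n dom T_n : sup_n ‖T_n φ‖ < ∞} and ‖T_n φ‖ ↗ ‖Tφ‖ is also closed. -/
open Filter Topology

/-- For a nondecreasing (in the sense of contractive domination) sequence of closed
linear operators `T n`, any limit operator `S` with
`dom S = {φ ∈ ⋂ dom T n : sup ‖T n φ‖ < ∞}` and `‖T n φ‖ ↗ ‖S φ‖` is closed. -/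
theorem nondecreasing_sequence_closed_limit
    {H KL : Type*} [NormedAddCommGroup H] [InnerProductSpace ℂ H] [CompleteSpace H]
    [NormedAddCommGroup KL] [InnerProductSpace ℂ KL] [CompleteSpace KL]
    {K : ℕ → Type*} [∀ n, NormedAddCommGroup (K n)] [∀ n, InnerProductSpace ℂ (K n)]
    [∀ n, CompleteSpace (K n)]
    (T : ∀ n, H →ₗ.[ℂ] K n)
    (hdom : ∀ n, (T (n + 1)).domain ≤ (T n).domain)
    (hmono : ∀ (n : ℕ) (f : H) (hf1 : f ∈ (T (n + 1)).domain) (hf0 : f ∈ (T n).domain),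
      ‖(T n) ⟨f, hf0⟩‖ ≤ ‖(T (n + 1)) ⟨f, hf1⟩‖)
    (hclosed : ∀ n, (T n).IsClosed)
    (S : H →ₗ.[ℂ] KL)
    (hSdom : ∀ φ : H, φ ∈ S.domain ↔
      ((∀ n, φ ∈ (T n).domain) ∧
        ∃ M : ℝ, ∀ (n : ℕ) (hφ : φ ∈ (T n).domain), ‖(T n) ⟨φ, hφ⟩‖ ≤ M))
    (hSlim : ∀ (φ : H) (hφ : φ ∈ S.domain) (hφn : ∀ n, φ ∈ (T n).domain),
      Tendsto (fun n => ‖(T n) ⟨φ, hφn n⟩‖) atTop (𝓝 ‖S ⟨φ, hφ⟩‖)) :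
    S.IsClosed := by
  -- every element of dom S lies in every dom (T n)
  have memT : ∀ f : H, f ∈ S.domain → ∀ n, f ∈ (T n).domain :=
    fun f hf n => ((hSdom f).1 hf).1 n
  -- monotonicity of the norms
  have mono : ∀ (f : H) (hf : ∀ n, f ∈ (T n).domain),
      Monotone (fun n => ‖(T n) ⟨f, hf n⟩‖) := by
    intro f hf
    exact monotone_nat_of_le_succ fun n => hmono n f (hf (n + 1)) (hf n)
  -- ‖T n f‖ ≤ ‖S f‖ on dom S
  have normle : ∀ (f : S.domain) (n : ℕ), ‖(T n) ⟨(f : H), memT f f.2 n⟩‖ ≤ ‖S f‖ := by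
    intro f n
    exact (mono f (memT f f.2)).ge_of_tendsto (hSlim f f.2 (memT f f.2)) n
  -- key difference estimate
  have key : ∀ (f g : S.domain) (n : ℕ),
      ‖(T n) ⟨(f : H), memT f f.2 n⟩ - (T n) ⟨(g : H), memT g g.2 n⟩‖ ≤ ‖S f - S g‖ := by
    intro f g n
    have h1 : (T n) ⟨(f : H), memT f f.2 n⟩ - (T n) ⟨(g : H), memT g g.2 n⟩
        = (T n) ⟨((f - g : S.domain) : H), memT _ (f - g).2 n⟩ := by
      rw [← (T n).map_sub]
      exact congrArg _ (Subtype.ext rfl)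
    have h2 : S f - S g = S (f - g) := (S.map_sub f g).symm
    rw [h1, h2]
    exact normle (f - g) n
  apply IsSeqClosed.isClosed
  intro u p hu hup
  choose x hx using fun k => (S.mem_graph_iff).1 (hu k)
  -- component convergences
  have hφ : Tendsto (fun k => ((x k : H))) atTop (𝓝 p.1) := by
    have := (continuous_fst.tendsto p).comp hup
    refine this.congr fun k => ?_
    simp [Function.comp, ← hx k]
  have hψ : Tendsto (fun k => S (x k)) atTop (𝓝 p.2) := by
    have := (continuous_snd.tendsto p).comp hup
    refine this.congr fun k => ?_
    simp [Function.comp, ← hx k]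
  have hSc : CauchySeq fun k => S (x k) := hψ.cauchySeq
  -- for each n, T n (x k) converges and the limit witnesses p.1 ∈ dom (T n)
  have hTconv : ∀ n, ∃ h : p.1 ∈ (T n).domain,
      Tendsto (fun k => (T n) ⟨(x k : H), memT _ (x k).2 n⟩) atTop
        (𝓝 ((T n) ⟨p.1, h⟩)) := by
    intro n
    have hc : CauchySeq fun k => (T n) ⟨(x k : H), memT _ (x k).2 n⟩ := by
      rw [Metric.cauchySeq_iff]
      intro ε hε
      obtain ⟨N, hN⟩ := Metric.cauchySeq_iff.1 hSc ε hε
      refine ⟨N, fun a ha b hb => ?_⟩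
      calc dist ((T n) ⟨(x a : H), memT _ (x a).2 n⟩) ((T n) ⟨(x b : H), memT _ (x b).2 n⟩)
          = ‖(T n) ⟨(x a : H), memT _ (x a).2 n⟩ - (T n) ⟨(x b : H), memT _ (x b).2 n⟩‖ :=
            dist_eq_norm _ _
        _ ≤ ‖S (x a) - S (x b)‖ := key (x a) (x b) n
        _ = dist (S (x a)) (S (x b)) := (dist_eq_norm _ _).symm
        _ < ε := hN a ha b hb
    obtain ⟨g, hg⟩ := cauchySeq_tendsto_of_complete hc
    have hcl : _root_.IsClosed ((T n).graph : Set (H × K n)) := hclosed n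
    have hmem : (p.1, g) ∈ (T n).graph := by
      refine hcl.mem_of_tendsto (hφ.prodMk_nhds hg) (Eventually.of_forall fun k => ?_)
      exact SetLike.mem_coe.2 ((T n).mem_graph ⟨↑(x k), memT _ (x k).2 n⟩)
    obtain ⟨y, hy⟩ := (T n).mem_graph_iff.1 hmem
    have hy1 : (y : H) = p.1 := hy.1
    have hy2 : (T n) y = g := hy.2
    have hd : p.1 ∈ (T n).domain := hy1 ▸ y.2
    refine ⟨hd, ?_⟩
    have : (⟨p.1, hd⟩ : (T n).domain) = y := Subtype.ext hy1.symm
    rw [this, hy2]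
    exact hg
  choose hφn hTn using hTconv
  -- p.1 ∈ dom S
  have hbdd : ∃ M : ℝ, ∀ k, ‖S (x k)‖ ≤ M := by
    obtain ⟨M, hM⟩ := hψ.norm.bddAbove_range
    exact ⟨M, fun k => hM ⟨k, rfl⟩⟩
  obtain ⟨M, hM⟩ := hbdd
  have hφS : p.1 ∈ S.domain := by
    refine (hSdom p.1).2 ⟨hφn, M, fun n h => ?_⟩
    refine le_of_tendsto' ((hTn n).norm) fun k => ?_
    exact le_trans (le_of_eq (by norm_num)) (le_trans (normle (x k) n) (hM k))
  -- S (x k) → S p.1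
  have hSconv : Tendsto (fun k => S (x k)) atTop (𝓝 (S ⟨p.1, hφS⟩)) := by
    rw [Metric.tendsto_atTop]
    intro ε hε
    obtain ⟨N, hN⟩ := Metric.cauchySeq_iff.1 hSc (ε / 2) (by linarith)
    refine ⟨N, fun k hk => ?_⟩
    -- for each n, ‖T n p.1 - T n (x k)‖ ≤ ε/2
    have step : ∀ n, ‖(T n) ⟨p.1, hφn n⟩ - (T n) ⟨(x k : H), memT _ (x k).2 n⟩‖ ≤ ε / 2 := by
      intro n
      have htd : Tendsto (fun j => ‖(T n) ⟨(x j : H), memT _ (x j).2 n⟩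
          - (T n) ⟨(x k : H), memT _ (x k).2 n⟩‖) atTop
          (𝓝 ‖(T n) ⟨p.1, hφn n⟩ - (T n) ⟨(x k : H), memT _ (x k).2 n⟩‖) :=
        ((hTn n).sub_const _).norm
      refine le_of_tendsto htd ?_
      filter_upwards [eventually_ge_atTop N] with j hj
      calc ‖(T n) ⟨(x j : H), memT _ (x j).2 n⟩ - (T n) ⟨(x k : H), memT _ (x k).2 n⟩‖
          ≤ ‖S (x j) - S (x k)‖ := key (x j) (x k) n
        _ = dist (S (x j)) (S (x k)) := (dist_eq_norm _ _).symm
        _ ≤ ε / 2 := (hN j hj k hk).le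
    -- hence ‖S p.1 - S (x k)‖ ≤ ε/2
    have hdiff : ‖S ((⟨p.1, hφS⟩ : S.domain) - x k)‖ ≤ ε / 2 := by
      have hlim := hSlim _ ((⟨p.1, hφS⟩ : S.domain) - x k).2
        (memT _ ((⟨p.1, hφS⟩ : S.domain) - x k).2)
      refine le_of_tendsto' hlim fun n => ?_
      have heq : (T n) ⟨(((⟨p.1, hφS⟩ : S.domain) - x k : S.domain) : H),
          memT _ ((⟨p.1, hφS⟩ : S.domain) - x k).2 n⟩
          = (T n) ⟨p.1, hφn n⟩ - (T n) ⟨(x k : H), memT _ (x k).2 n⟩ := by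
        rw [← (T n).map_sub]
        exact congrArg _ (Subtype.ext rfl)
      rw [heq]
      exact step n
    rw [S.map_sub] at hdiff
    calc dist (S (x k)) (S ⟨p.1, hφS⟩) = ‖S (x k) - S ⟨p.1, hφS⟩‖ := dist_eq_norm _ _
      _ = ‖S ⟨p.1, hφS⟩ - S (x k)‖ := norm_sub_rev _ _
      _ ≤ ε / 2 := hdiff
      _ < ε := by linarith
  have hfinal : S ⟨p.1, hφS⟩ = p.2 := tendsto_nhds_unique hSconv hψ
  exact S.mem_graph_iff.2 ⟨⟨p.1, hφS⟩, rfl, hfinal⟩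
end

section
/- Let A be a linear relation from H to K_A and B a linear relation from H to K_B, and suppose there is a contraction C : K_B → K_A with C B ⊆ A. Then the regular parts satisfy [(I − P_A) C] B_reg ⊆ A_reg, where P_A is the orthogonal projection of K_A onto mul A**; in particular A_reg is contractively dominated by B_reg. -/
/-!
Since `(h, k) ↦ (h, C k)` is continuous, `C B ⊆ A` gives `C B** ⊆ A**`, and in particular
`C` maps `mul B**` into `mul A**`. Hence `(I − P_A) C` kills `C P_B k` for every `k`, so
`(I − P_A) C (I − P_B) = (I − P_A) C`, which turns `C B ⊆ A` into `(I − P_A) C B_reg ⊆ A_reg`.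
Finally `I − P_A` is a contraction, being an orthogonal projection.
-/

section OrthogonalProjection

variable {𝕜 K : Type*} [RCLike 𝕜] [NormedAddCommGroup K] [InnerProductSpace 𝕜 K]
  {M : Submodule 𝕜 K} {P : K →L[𝕜] K}

lemma apply_eq_self_of_isOrthogonalProjection (hP : ∀ k : K, P k ∈ M ∧ k - P k ∈ Mᗮ)
    {m : K} (hm : m ∈ M) : P m = m := by
  have hzero : m - P m = 0 :=
    Submodule.disjoint_def.mp M.orthogonal_disjoint _ (M.sub_mem hm (hP m).1) (hP m).2
  exact (sub_eq_zero.mp hzero).symm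

lemma norm_sub_apply_le_of_isOrthogonalProjection (hP : ∀ k : K, P k ∈ M ∧ k - P k ∈ Mᗮ)
    (k : K) : ‖k - P k‖ ≤ ‖k‖ := by
  have horth : inner 𝕜 (P k) (k - P k) = 0 :=
    (Submodule.mem_orthogonal M (k - P k)).1 (hP k).2 (P k) (hP k).1
  have hpyth := norm_add_sq_eq_norm_sq_add_norm_sq_of_inner_eq_zero _ _ horth
  rw [add_sub_cancel] at hpyth
  nlinarith [norm_nonneg (P k), norm_nonneg k, norm_nonneg (k - P k)]

lemma norm_id_sub_comp_le_one_of_isOrthogonalProjection {E : Type*} [NormedAddCommGroup E]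
    [NormedSpace 𝕜 E] (hP : ∀ k : K, P k ∈ M ∧ k - P k ∈ Mᗮ) {C : E →L[𝕜] K} (hC : ‖C‖ ≤ 1) :
    ‖(ContinuousLinearMap.id 𝕜 K - P).comp C‖ ≤ 1 := by
  refine ContinuousLinearMap.opNorm_le_bound _ zero_le_one fun x => ?_
  calc ‖C x - P (C x)‖ ≤ ‖C x‖ := norm_sub_apply_le_of_isOrthogonalProjection hP (C x)
    _ ≤ ‖C‖ * ‖x‖ := C.le_opNorm x
    _ ≤ 1 * ‖x‖ := by gcongr

end OrthogonalProjection

section LinearRelation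

variable {𝕜 H KA KB : Type*} [RCLike 𝕜]
  [NormedAddCommGroup H] [NormedSpace 𝕜 H]
  [NormedAddCommGroup KA] [NormedSpace 𝕜 KA] [NormedAddCommGroup KB] [NormedSpace 𝕜 KB]
  {A : Submodule 𝕜 (H × KA)} {B : Submodule 𝕜 (H × KB)} {C : KB →L[𝕜] KA}

lemma mem_topologicalClosure_of_comp_subset (hCB : ∀ p ∈ B, (p.1, C p.2) ∈ A)
    {p : H × KB} (hp : p ∈ B.topologicalClosure) : (p.1, C p.2) ∈ A.topologicalClosure := by
  let f : H × KB →L[𝕜] H × KA := (ContinuousLinearMap.id 𝕜 H).prodMap C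
  have hle : B.topologicalClosure ≤ A.topologicalClosure.comap (f : H × KB →ₗ[𝕜] H × KA) :=
    B.topologicalClosure_minimal (fun p hp => A.le_topologicalClosure (hCB p hp))
      (A.isClosed_topologicalClosure.preimage f.continuous)
  exact hle hp

lemma mem_mul_closure_of_comp_subset (hCB : ∀ p ∈ B, (p.1, C p.2) ∈ A) {k : KB}
    (hk : k ∈ B.topologicalClosure.comap (LinearMap.inr 𝕜 H KB)) :
    C k ∈ A.topologicalClosure.comap (LinearMap.inr 𝕜 H KA) := by
  simpa using mem_topologicalClosure_of_comp_subset hCB hk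

end LinearRelation

theorem regular_parts_domination_general
    {H KA KB : Type*} [NormedAddCommGroup H] [InnerProductSpace ℂ H]
    [NormedAddCommGroup KA] [InnerProductSpace ℂ KA]
    [NormedAddCommGroup KB] [InnerProductSpace ℂ KB]
    (A : Submodule ℂ (H × KA)) (B : Submodule ℂ (H × KB))
    (C : KB →L[ℂ] KA) (hC : ‖C‖ ≤ 1)
    (hCB : ∀ p ∈ B, (p.1, C p.2) ∈ A)
    (MA : Submodule ℂ KA)
    (hMA : MA = Submodule.comap (LinearMap.inr ℂ H KA) A.topologicalClosure)
    (MB : Submodule ℂ KB)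
    (hMB : MB = Submodule.comap (LinearMap.inr ℂ H KB) B.topologicalClosure)
    (PA : KA →L[ℂ] KA) (hPA : ∀ k : KA, PA k ∈ MA ∧ k - PA k ∈ MAᗮ)
    (PB : KB →L[ℂ] KB) (hPB : ∀ k : KB, PB k ∈ MB ∧ k - PB k ∈ MBᗮ)
    (Areg : Submodule ℂ (H × KA))
    (hAreg : Areg = Submodule.map
      (LinearMap.prodMap (LinearMap.id : H →ₗ[ℂ] H)
        ((ContinuousLinearMap.id ℂ KA - PA) : KA →L[ℂ] KA).toLinearMap) A)
    (Breg : Submodule ℂ (H × KB))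
    (hBreg : Breg = Submodule.map
      (LinearMap.prodMap (LinearMap.id : H →ₗ[ℂ] H)
        ((ContinuousLinearMap.id ℂ KB - PB) : KB →L[ℂ] KB).toLinearMap) B) :
    (∀ q ∈ Breg, (q.1, C q.2 - PA (C q.2)) ∈ Areg) ∧
    (∃ C' : KB →L[ℂ] KA, ‖C'‖ ≤ 1 ∧ ∀ q ∈ Breg, (q.1, C' q.2) ∈ Areg) := by
  subst hMA hMB
  have hdom : ∀ q ∈ Breg, (q.1, C q.2 - PA (C q.2)) ∈ Areg := by
    subst hAreg hBreg
    rintro _ ⟨p, hp, rfl⟩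
    have hfix : PA (C (PB p.2)) = C (PB p.2) := apply_eq_self_of_isOrthogonalProjection hPA
      (mem_mul_closure_of_comp_subset hCB (hPB p.2).1)
    exact ⟨(p.1, C p.2), hCB p hp, Prod.ext rfl (by simp [hfix])⟩
  exact ⟨hdom, (ContinuousLinearMap.id ℂ KA - PA).comp C,
    norm_id_sub_comp_le_one_of_isOrthogonalProjection hPA hC, hdom⟩

/-- If `C B ⊆ A` for a contraction `C`, then `[(I − P_A) C] B_reg ⊆ A_reg`,
where `P_A`, `P_B` are the orthogonal projections onto `mul A**`, `mul B**`;
in particular `A_reg` is contractively dominated by `B_reg`. -/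
theorem regular_parts_domination
    {H KA KB : Type*} [NormedAddCommGroup H] [InnerProductSpace ℂ H] [CompleteSpace H]
    [NormedAddCommGroup KA] [InnerProductSpace ℂ KA] [CompleteSpace KA]
    [NormedAddCommGroup KB] [InnerProductSpace ℂ KB] [CompleteSpace KB]
    (A : Submodule ℂ (H × KA)) (B : Submodule ℂ (H × KB))
    (C : KB →L[ℂ] KA) (hC : ‖C‖ ≤ 1)
    (hCB : ∀ p ∈ B, (p.1, C p.2) ∈ A)
    (MA : Submodule ℂ KA)
    (hMA : MA = Submodule.comap (LinearMap.inr ℂ H KA) A.topologicalClosure)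
    (MB : Submodule ℂ KB)
    (hMB : MB = Submodule.comap (LinearMap.inr ℂ H KB) B.topologicalClosure)
    (PA : KA →L[ℂ] KA) (hPA : ∀ k : KA, PA k ∈ MA ∧ k - PA k ∈ MAᗮ)
    (PB : KB →L[ℂ] KB) (hPB : ∀ k : KB, PB k ∈ MB ∧ k - PB k ∈ MBᗮ)
    (Areg : Submodule ℂ (H × KA))
    (hAreg : Areg = Submodule.map
      (LinearMap.prodMap (LinearMap.id : H →ₗ[ℂ] H)
        ((ContinuousLinearMap.id ℂ KA - PA) : KA →L[ℂ] KA).toLinearMap) A)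
    (Breg : Submodule ℂ (H × KB))
    (hBreg : Breg = Submodule.map
      (LinearMap.prodMap (LinearMap.id : H →ₗ[ℂ] H)
        ((ContinuousLinearMap.id ℂ KB - PB) : KB →L[ℂ] KB).toLinearMap) B) :
    (∀ q ∈ Breg, (q.1, C q.2 - PA (C q.2)) ∈ Areg) ∧
    (∃ C' : KB →L[ℂ] KA, ‖C'‖ ≤ 1 ∧ ∀ q ∈ Breg, (q.1, C' q.2) ∈ Areg) :=
  regular_parts_domination_general A B C hC hCB MA hMA MB hMB PA hPA PB hPB Areg hAreg Breg hBreg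
end

section
/- Let T be a linear relation from H to K. Then mul(T*T) = mul T*, where T*T = {(f,f') : ∃ h, (f,h) ∈ T and (h,f') ∈ T*}; moreover for every (f,f') in T*T with intermediate element h one has ⟨f', f⟩ = ‖h‖², and consequently the relation T*T is nonnegative: ⟨f', f⟩ ≥ 0 for all (f,f') ∈ T*T. -/
/-- The adjoint of a linear relation `T ⊆ H × K`, as a set of pairs in `K × H`. -/
def adjRel {H K : Type*} [NormedAddCommGroup H] [InnerProductSpace ℂ H]
    [NormedAddCommGroup K] [InnerProductSpace ℂ K]
    (T : Set (H × K)) : Set (K × H) :=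
  {q | ∀ p ∈ T, (inner ℂ p.2 q.1 : ℂ) = inner ℂ p.1 q.2}

section adjRel

variable {H K : Type*} [NormedAddCommGroup H] [InnerProductSpace ℂ H]
  [NormedAddCommGroup K] [InnerProductSpace ℂ K]

/-- Testing `(h, f') ∈ T*` against `(f, h) ∈ T` itself gives `⟨h, h⟩ = ⟨f, f'⟩`. -/
theorem inner_eq_norm_sq_of_mem_adjRel {T : Set (H × K)} {f f' : H} {h : K}
    (hT : (f, h) ∈ T) (hadj : (h, f') ∈ adjRel T) :
    (inner ℂ f f' : ℂ) = (‖h‖ : ℂ) ^ 2 := by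
  rw [← hadj (f, h) hT, inner_self_eq_norm_sq_to_K]
  rfl

theorem eq_zero_of_mem_adjRel {T : Set (H × K)} {f' : H} {h : K}
    (hT : (0, h) ∈ T) (hadj : (h, f') ∈ adjRel T) : h = 0 := by
  have hnorm := inner_eq_norm_sq_of_mem_adjRel hT hadj
  rw [inner_zero_left, eq_comm, pow_eq_zero_iff two_ne_zero, Complex.ofReal_eq_zero,
    norm_eq_zero] at hnorm
  exact hnorm

theorem mul_adjRel_comp_eq {T : Set (H × K)} (hT₀ : ((0 : H), (0 : K)) ∈ T) :
    {f' : H | ∃ h : K, ((0 : H), h) ∈ T ∧ (h, f') ∈ adjRel T} =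
      {f' : H | ((0 : K), f') ∈ adjRel T} := by
  ext f'
  constructor
  · rintro ⟨h, hT, hadj⟩
    rwa [← eq_zero_of_mem_adjRel hT hadj]
  · exact fun hadj => ⟨0, hT₀, hadj⟩

theorem inner_nonneg_of_mem_adjRel_comp {T : Set (H × K)} {f f' : H}
    (hcomp : ∃ h : K, (f, h) ∈ T ∧ (h, f') ∈ adjRel T) :
    0 ≤ (inner ℂ f f' : ℂ).re ∧ (inner ℂ f f' : ℂ).im = 0 := by
  obtain ⟨h, hT, hadj⟩ := hcomp
  rw [inner_eq_norm_sq_of_mem_adjRel hT hadj, ← Complex.ofReal_pow, Complex.ofReal_re,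
    Complex.ofReal_im]
  exact ⟨sq_nonneg _, rfl⟩

end adjRel

theorem mul_adjoint_comp_and_nonneg_general
    {H K : Type*} [NormedAddCommGroup H] [InnerProductSpace ℂ H]
    [NormedAddCommGroup K] [InnerProductSpace ℂ K]
    (T : Submodule ℂ (H × K)) :
    ({f' : H | ∃ h : K, ((0 : H), h) ∈ T ∧ (h, f') ∈ adjRel (T : Set (H × K))} =
      {f' : H | ((0 : K), f') ∈ adjRel (T : Set (H × K))}) ∧
    (∀ (f f' : H) (h : K), (f, h) ∈ T → (h, f') ∈ adjRel (T : Set (H × K)) →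
      (inner ℂ f f' : ℂ) = (‖h‖ : ℂ) ^ 2) ∧
    (∀ f f' : H, (∃ h : K, (f, h) ∈ T ∧ (h, f') ∈ adjRel (T : Set (H × K))) →
      0 ≤ (inner ℂ f f' : ℂ).re ∧ (inner ℂ f f' : ℂ).im = 0) :=
  ⟨mul_adjRel_comp_eq T.zero_mem,
    fun _ _ _ => inner_eq_norm_sq_of_mem_adjRel,
    fun _ _ => inner_nonneg_of_mem_adjRel_comp⟩

/-- For a linear relation `T`: `mul (T*T) = mul T*`; for `(f, f') ∈ T*T` with
intermediate element `h` one has `⟨f, f'⟩ = ‖h‖²`; consequently `T*T` is a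
nonnegative relation. -/
theorem mul_adjoint_comp_and_nonneg
    {H K : Type*} [NormedAddCommGroup H] [InnerProductSpace ℂ H] [CompleteSpace H]
    [NormedAddCommGroup K] [InnerProductSpace ℂ K] [CompleteSpace K]
    (T : Submodule ℂ (H × K)) :
    ({f' : H | ∃ h : K, ((0 : H), h) ∈ T ∧ (h, f') ∈ adjRel (T : Set (H × K))} =
      {f' : H | ((0 : K), f') ∈ adjRel (T : Set (H × K))}) ∧
    (∀ (f f' : H) (h : K), (f, h) ∈ T → (h, f') ∈ adjRel (T : Set (H × K)) →
      (inner ℂ f f' : ℂ) = (‖h‖ : ℂ) ^ 2) ∧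
    (∀ f f' : H, (∃ h : K, (f, h) ∈ T ∧ (h, f') ∈ adjRel (T : Set (H × K))) →
      0 ≤ (inner ℂ f f' : ℂ).re ∧ (inner ℂ f f' : ℂ).im = 0) :=
  mul_adjoint_comp_and_nonneg_general T
end

section
/- Let T be a linear relation from H to K with P the orthogonal projection onto mul T**. Then T*T ⊆ T* T_reg = (T_reg)* T_reg, where T_reg = (I−P)T. -/
open Submodule

section AdjointRelation

variable {H K : Type*} [NormedAddCommGroup H] [InnerProductSpace ℂ H]
  [NormedAddCommGroup K] [InnerProductSpace ℂ K]

theorem adjRel_closure (T : Set (H × K)) : adjRel (closure T) = adjRel T := by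
  refine subset_antisymm (fun q hq p hp => hq p (subset_closure hp)) fun q hq => ?_
  have hclosed : IsClosed {p : H × K | (inner ℂ p.2 q.1 : ℂ) = inner ℂ p.1 q.2} :=
    isClosed_eq (continuous_snd.inner continuous_const) (continuous_fst.inner continuous_const)
  exact fun p hp => closure_minimal hq hclosed hp

theorem mem_orthogonal_of_mem_adjRel (T : Submodule ℂ (H × K)) {h : K} {g : H}
    (hadj : (h, g) ∈ adjRel (T : Set (H × K))) :
    h ∈ (comap (LinearMap.inr ℂ H K) T.topologicalClosure)ᗮ := by
  rw [← adjRel_closure, ← topologicalClosure_coe] at hadj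
  refine (mem_orthogonal _ _).2 fun u hu => ?_
  simpa using hadj (0, u) hu

theorem mem_adjRel_image_prodMap_iff {T : Set (H × K)} {R : K → K} {h : K} {g : H}
    (hR : ∀ k, (inner ℂ (R k) h : ℂ) = inner ℂ k h) :
    (h, g) ∈ adjRel (Prod.map id R '' T) ↔ (h, g) ∈ adjRel T := by
  simp only [adjRel, Set.mem_ofPred_eq, Set.forall_mem_image, Prod.forall, Prod.map_fst,
    Prod.map_snd, id, hR]

end AdjointRelation

section Projection

variable {K : Type*} [NormedAddCommGroup K] [InnerProductSpace ℂ K] {M : Submodule ℂ K}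
  {P : K → K}

theorem apply_eq_zero_of_mem_orthogonal (hP : ∀ k, P k ∈ M ∧ k - P k ∈ Mᗮ) {x : K}
    (hx : x ∈ Mᗮ) : P x = 0 := by
  refine (disjoint_def.1 M.orthogonal_disjoint) (P x) (hP x).1 ?_
  simpa using Mᗮ.sub_mem hx (hP x).2

theorem inner_sub_apply_left_of_mem_orthogonal (hP : ∀ k, P k ∈ M) {h : K} (hh : h ∈ Mᗮ)
    (k : K) : (inner ℂ (k - P k) h : ℂ) = inner ℂ k h := by
  rw [inner_sub_left, inner_right_of_mem_orthogonal (hP k) hh, sub_zero]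

end Projection

theorem adjoint_comp_regular_part_general
    {H K : Type*} [NormedAddCommGroup H] [InnerProductSpace ℂ H]
    [NormedAddCommGroup K] [InnerProductSpace ℂ K]
    (T : Submodule ℂ (H × K))
    (M : Submodule ℂ K)
    (hM : M = Submodule.comap (LinearMap.inr ℂ H K) T.topologicalClosure)
    (P : K →L[ℂ] K) (hP : ∀ k : K, P k ∈ M ∧ k - P k ∈ Mᗮ)
    (Treg : Submodule ℂ (H × K))
    (hTreg : Treg = Submodule.map
      (LinearMap.prodMap (LinearMap.id : H →ₗ[ℂ] H)
        ((ContinuousLinearMap.id ℂ K - P) : K →L[ℂ] K).toLinearMap) T) :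
    ({q : H × H | ∃ h : K, (q.1, h) ∈ T ∧ (h, q.2) ∈ adjRel (T : Set (H × K))} ⊆
      {q : H × H | ∃ h : K, (q.1, h) ∈ Treg ∧ (h, q.2) ∈ adjRel (T : Set (H × K))}) ∧
    ({q : H × H | ∃ h : K, (q.1, h) ∈ Treg ∧ (h, q.2) ∈ adjRel (T : Set (H × K))} =
      {q : H × H | ∃ h : K, (q.1, h) ∈ Treg ∧
        (h, q.2) ∈ adjRel (Treg : Set (H × K))}) := by
  have hTreg_coe : (Treg : Set (H × K)) = Prod.map id (fun k => k - P k) '' T := by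
    rw [hTreg, map_coe]
    rfl
  have hTreg_orth {f : H} {h : K} (hfh : (f, h) ∈ Treg) : h ∈ Mᗮ := by
    rw [← SetLike.mem_coe, hTreg_coe] at hfh
    obtain ⟨⟨_, k⟩, -, hk⟩ := hfh
    cases hk
    exact (hP k).2
  refine ⟨?_, ?_⟩
  · rintro ⟨f, g⟩ ⟨h, hfh, hadj⟩
    have hPh : P h = 0 :=
      apply_eq_zero_of_mem_orthogonal hP (hM ▸ mem_orthogonal_of_mem_adjRel T hadj)
    refine ⟨h, ?_, hadj⟩
    rw [← SetLike.mem_coe, hTreg_coe]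
    exact ⟨(f, h), hfh, by simp [hPh]⟩
  · ext ⟨f, g⟩
    refine exists_congr fun h => and_congr_right fun hfh => ?_
    rw [hTreg_coe, mem_adjRel_image_prodMap_iff
      (inner_sub_apply_left_of_mem_orthogonal (fun k => (hP k).1) (hTreg_orth hfh))]

/-- For a linear relation `T` with `P` the orthogonal projection onto `mul T**`:
`T*T ⊆ T* T_reg = (T_reg)* T_reg`, where `T_reg = (I−P)T`. -/
theorem adjoint_comp_regular_part
    {H K : Type*} [NormedAddCommGroup H] [InnerProductSpace ℂ H] [CompleteSpace H]
    [NormedAddCommGroup K] [InnerProductSpace ℂ K] [CompleteSpace K]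
    (T : Submodule ℂ (H × K))
    (M : Submodule ℂ K)
    (hM : M = Submodule.comap (LinearMap.inr ℂ H K) T.topologicalClosure)
    (P : K →L[ℂ] K) (hP : ∀ k : K, P k ∈ M ∧ k - P k ∈ Mᗮ)
    (Treg : Submodule ℂ (H × K))
    (hTreg : Treg = Submodule.map
      (LinearMap.prodMap (LinearMap.id : H →ₗ[ℂ] H)
        ((ContinuousLinearMap.id ℂ K - P) : K →L[ℂ] K).toLinearMap) T) :
    ({q : H × H | ∃ h : K, (q.1, h) ∈ T ∧ (h, q.2) ∈ adjRel (T : Set (H × K))} ⊆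
      {q : H × H | ∃ h : K, (q.1, h) ∈ Treg ∧ (h, q.2) ∈ adjRel (T : Set (H × K))}) ∧
    ({q : H × H | ∃ h : K, (q.1, h) ∈ Treg ∧ (h, q.2) ∈ adjRel (T : Set (H × K))} =
      {q : H × H | ∃ h : K, (q.1, h) ∈ Treg ∧
        (h, q.2) ∈ adjRel (Treg : Set (H × K))}) :=
  adjoint_comp_regular_part_general T M hM P hP Treg hTreg
end
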